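/- Let r ∈ ℝ^N, Z ∈ ℝ^{N×k}, λ₁ > 0, λ₂ > 0, and set a = Zᵀr. Then θ = 0 minimizes f(θ) = (1/2)‖r − Zθ‖₂² + λ₁‖θ‖₂ + λ₂‖θ‖₁ over θ ∈ ℝ^k if and only if Σ_{j=1}^{k} S(a_j, λ₂)² ≤ λ₁², where S(a, λ) = sign(a)·(|a| − λ)₊ is the soft-threshold operator. -/
import Mathlib

/-- Euclidean norm of a vector in ℝ^n. -/
noncomputable def norm2 {n : ℕ} (v : Fin n → ℝ) : ℝ :=
  Real.sqrt (∑ i, v i ^ 2)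

/-- The soft-threshold operator `S(a, λ) = sign(a)·(|a| − λ)₊`. -/
noncomputable def soft (a lam : ℝ) : ℝ :=
  Real.sign a * max (|a| - lam) 0

lemma norm2_nonneg {n : ℕ} (v : Fin n → ℝ) : 0 ≤ norm2 v := Real.sqrt_nonneg _

lemma norm2_sq {n : ℕ} (v : Fin n → ℝ) : norm2 v ^ 2 = ∑ i, v i ^ 2 :=
  Real.sq_sqrt (Finset.sum_nonneg fun i _ => sq_nonneg _)


lemma soft_mul_le (a lam t : ℝ) (hlam : 0 ≤ lam) :
    a * t - lam * |t| ≤ soft a lam * t := by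
  unfold soft
  rcases le_total (|a| - lam) 0 with h | h
  · rw [max_eq_right h]
    have h1 : a * t ≤ |a| * |t| := by
      calc a * t ≤ |a * t| := le_abs_self _
      _ = |a| * |t| := abs_mul _ _
    have h2 : |a| * |t| ≤ lam * |t| := by
      apply mul_le_mul_of_nonneg_right _ (abs_nonneg t)
      linarith
    nlinarith
  · rw [max_eq_left h]
    have hsa : Real.sign a * |a| = a := by
      rcases lt_trichotomy a 0 with h' | h' | h'
      · rw [Real.sign_of_neg h', abs_of_neg h']; ring
      · simp [h']
      · rw [Real.sign_of_pos h', abs_of_pos h']; ring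
    have h3 : Real.sign a * t ≤ |t| := by
      calc Real.sign a * t ≤ |Real.sign a * t| := le_abs_self _
      _ = |Real.sign a| * |t| := abs_mul _ _
      _ ≤ 1 * |t| := by
          apply mul_le_mul_of_nonneg_right _ (abs_nonneg t)
          rcases lt_trichotomy a 0 with h' | h' | h' <;>
            simp [Real.sign_of_neg, Real.sign_of_pos, h', le_of_lt, abs_of_neg]
      _ = |t| := one_mul _
    have : Real.sign a * (|a| - lam) * t = a * t - lam * (Real.sign a * t) := by
      rw [mul_comm, mul_sub, ← mul_assoc, mul_comm t, hsa]; ring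
    rw [this]
    nlinarith

lemma soft_mul_self (a lam : ℝ) (hlam : 0 ≤ lam) :
    a * soft a lam - lam * |soft a lam| = soft a lam ^ 2 := by
  unfold soft
  rcases le_total (|a| - lam) 0 with h | h
  · rw [max_eq_right h]; simp
  · rw [max_eq_left h]
    rcases eq_or_ne a 0 with h0 | h0
    · simp [h0]
    · have hsa : Real.sign a * |a| = a := by
        rcases lt_trichotomy a 0 with h' | h' | h'
        · rw [Real.sign_of_neg h', abs_of_neg h']; ring
        · exact absurd h' h0
        · rw [Real.sign_of_pos h', abs_of_pos h']; ring
      have hs1 : Real.sign a ^ 2 = 1 := by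
        rcases lt_trichotomy a 0 with h' | h' | h'
        · rw [Real.sign_of_neg h']; ring
        · exact absurd h' h0
        · rw [Real.sign_of_pos h']; ring
      have habs : |Real.sign a * (|a| - lam)| = |a| - lam := by
        rw [abs_mul, abs_of_nonneg h]
        rcases lt_trichotomy a 0 with h' | h' | h'
        · rw [Real.sign_of_neg h']; simp
        · exact absurd h' h0
        · rw [Real.sign_of_pos h']; simp
      have hsa2 : Real.sign a * a = |a| := by
        rcases lt_trichotomy a 0 with h' | h' | h'
        · rw [Real.sign_of_neg h', abs_of_neg h']; ring
        · exact absurd h' h0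
        · rw [Real.sign_of_pos h', abs_of_pos h']; ring
      have key : a * (Real.sign a * (|a| - lam)) = |a| * (|a| - lam) := by
        rw [← mul_assoc, mul_comm a, hsa2]
      rw [habs, key, mul_pow, hs1, one_mul]
      ring


/-- With `a = Zᵀr`, the zero vector minimizes the blockwise sparse group lasso
objective `f(θ) = (1/2)‖r − Zθ‖₂² + λ₁‖θ‖₂ + λ₂‖θ‖₁` if and only if
`Σ_j S(a_j, λ₂)² ≤ λ₁²`. -/
theorem sparse_group_lasso_zero_iff_soft_threshold (N k : ℕ) (r : Fin N → ℝ)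
    (Z : Matrix (Fin N) (Fin k) ℝ) (lam1 lam2 : ℝ)
    (hlam1 : 0 < lam1) (hlam2 : 0 < lam2)
    (a : Fin k → ℝ) (ha : a = Z.transpose.mulVec r) :
    (∀ θ : Fin k → ℝ,
        (1 / 2) * norm2 (r - Z.mulVec 0) ^ 2 + lam1 * norm2 (0 : Fin k → ℝ)
            + lam2 * ∑ j, |(0 : Fin k → ℝ) j|
          ≤ (1 / 2) * norm2 (r - Z.mulVec θ) ^ 2 + lam1 * norm2 θ
            + lam2 * ∑ j, |θ j|)
      ↔ ∑ j, soft (a j) lam2 ^ 2 ≤ lam1 ^ 2 := by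
  have hzero : norm2 (r - Z.mulVec 0) ^ 2 = ∑ i, r i ^ 2 := by
    rw [Matrix.mulVec_zero, sub_zero, norm2_sq]
  have h00 : norm2 (0 : Fin k → ℝ) = 0 := by simp [norm2]
  have habs0 : (∑ j, |(0 : Fin k → ℝ) j|) = 0 := by simp
  have hexp : ∀ θ : Fin k → ℝ, norm2 (r - Z.mulVec θ) ^ 2
      = (∑ i, r i ^ 2) - 2 * (∑ j, a j * θ j) + ∑ i, (Z.mulVec θ) i ^ 2 := by
    intro θ
    have swap : ∑ i, r i * (Z.mulVec θ) i = ∑ j, a j * θ j := by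
      subst ha
      simp only [Matrix.mulVec, dotProduct, Matrix.transpose_apply,
        Finset.sum_mul, Finset.mul_sum]
      rw [Finset.sum_comm]
      exact Finset.sum_congr rfl fun j _ => Finset.sum_congr rfl fun i _ => by ring
    rw [norm2_sq]
    calc ∑ i, (r - Z.mulVec θ) i ^ 2
        = ∑ i, (r i ^ 2 - 2 * (r i * (Z.mulVec θ) i) + (Z.mulVec θ) i ^ 2) := by
          exact Finset.sum_congr rfl fun i _ => by simp [Pi.sub_apply]; ring
      _ = (∑ i, r i ^ 2) - 2 * (∑ i, r i * (Z.mulVec θ) i) + ∑ i, (Z.mulVec θ) i ^ 2 := by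
          rw [Finset.sum_add_distrib, Finset.sum_sub_distrib, Finset.mul_sum]
      _ = _ := by rw [swap]
  have hiff : ∀ θ : Fin k → ℝ,
      ((1 / 2) * norm2 (r - Z.mulVec 0) ^ 2 + lam1 * norm2 (0 : Fin k → ℝ)
            + lam2 * ∑ j, |(0 : Fin k → ℝ) j|
          ≤ (1 / 2) * norm2 (r - Z.mulVec θ) ^ 2 + lam1 * norm2 θ
            + lam2 * ∑ j, |θ j|)
        ↔ (∑ j, a j * θ j) - lam2 * (∑ j, |θ j|)
            ≤ (1 / 2) * (∑ i, (Z.mulVec θ) i ^ 2) + lam1 * norm2 θ := by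
    intro θ
    rw [hzero, hexp θ, h00, habs0]
    constructor <;> intro h <;> linarith
  constructor
  · intro hmin
    by_contra hcon
    push_neg at hcon
    have hns : norm2 (fun j => soft (a j) lam2) ^ 2 = ∑ j, soft (a j) lam2 ^ 2 :=
      norm2_sq _
    have hnsnn : 0 ≤ norm2 (fun j => soft (a j) lam2) := norm2_nonneg _
    have hlt : lam1 < norm2 (fun j => soft (a j) lam2) := by
      apply lt_of_pow_lt_pow_left₀ 2 hnsnn
      rw [hns]; exact hcon
    set ns := norm2 (fun j => soft (a j) lam2) with hnsdef
    set S2 := ∑ j, soft (a j) lam2 ^ 2 with hS2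
    set Q := ∑ i, (Z.mulVec (fun j => soft (a j) lam2)) i ^ 2 with hQdef
    have hQ : 0 ≤ Q := Finset.sum_nonneg fun i _ => sq_nonneg _
    have hεpos : 0 < S2 - lam1 * ns := by nlinarith
    set t := (S2 - lam1 * ns) / (Q + 1) with ht
    have htpos : 0 < t := div_pos hεpos (by linarith)
    have h1 := (hiff (fun j => t * soft (a j) lam2)).mp (hmin _)
    have e1 : ∑ j, a j * (t * soft (a j) lam2) = t * ∑ j, a j * soft (a j) lam2 := by
      rw [Finset.mul_sum]; exact Finset.sum_congr rfl fun j _ => by ring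
    have e2 : ∑ j, |t * soft (a j) lam2| = t * ∑ j, |soft (a j) lam2| := by
      rw [Finset.mul_sum]
      exact Finset.sum_congr rfl fun j _ => by rw [abs_mul, abs_of_pos htpos]
    have e3 : norm2 (fun j => t * soft (a j) lam2) = t * ns := by
      rw [hnsdef]
      unfold norm2
      have hsumeq : ∑ j, (t * soft (a j) lam2) ^ 2 = t ^ 2 * ∑ j, soft (a j) lam2 ^ 2 := by
        rw [Finset.mul_sum]; exact Finset.sum_congr rfl fun j _ => by ring
      rw [hsumeq, Real.sqrt_mul (sq_nonneg t), Real.sqrt_sq htpos.le]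
    have e4 : ∀ i, (Z.mulVec (fun j => t * soft (a j) lam2)) i
        = t * (Z.mulVec (fun j => soft (a j) lam2)) i := by
      intro i
      simp only [Matrix.mulVec, dotProduct, Finset.mul_sum]
      exact Finset.sum_congr rfl fun j _ => by ring
    have e5 : ∑ i, (Z.mulVec (fun j => t * soft (a j) lam2)) i ^ 2 = t ^ 2 * Q := by
      rw [hQdef, Finset.mul_sum]
      exact Finset.sum_congr rfl fun i _ => by rw [e4]; ring
    rw [e1, e2, e3, e5] at h1
    have key : (∑ j, a j * soft (a j) lam2) - lam2 * ∑ j, |soft (a j) lam2| = S2 := by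
      rw [hS2, Finset.mul_sum, ← Finset.sum_sub_distrib]
      exact Finset.sum_congr rfl fun j _ => soft_mul_self (a j) lam2 hlam2.le
    have h1' : t * S2 ≤ t * ((1 / 2) * t * Q + lam1 * ns) := by
      calc t * S2 = t * (∑ j, a j * soft (a j) lam2) - lam2 * (t * ∑ j, |soft (a j) lam2|) := by
            rw [← key]; ring
        _ ≤ (1 / 2) * (t ^ 2 * Q) + lam1 * (t * ns) := h1
        _ = t * ((1 / 2) * t * Q + lam1 * ns) := by ring
    have h2 : S2 ≤ (1 / 2) * t * Q + lam1 * ns := le_of_mul_le_mul_left h1' htpos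
    have htQ : t * (Q + 1) = S2 - lam1 * ns := by
      rw [ht]; field_simp
    nlinarith [h2, hQ, hεpos, htQ, htpos]
  · intro hsum θ
    rw [hiff θ]
    have hQθ : (0 : ℝ) ≤ ∑ i, (Z.mulVec θ) i ^ 2 := Finset.sum_nonneg fun i _ => sq_nonneg _
    have step1 : (∑ j, a j * θ j) - lam2 * ∑ j, |θ j| ≤ ∑ j, soft (a j) lam2 * θ j := by
      rw [Finset.mul_sum, ← Finset.sum_sub_distrib]
      exact Finset.sum_le_sum fun j _ => soft_mul_le (a j) lam2 (θ j) hlam2.le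
    have step2 : ∑ j, soft (a j) lam2 * θ j ≤ lam1 * norm2 θ := by
      have hnn : 0 ≤ lam1 * norm2 θ := mul_nonneg hlam1.le (norm2_nonneg θ)
      have hsq : (∑ j, soft (a j) lam2 * θ j) ^ 2 ≤ (lam1 * norm2 θ) ^ 2 := by
        calc (∑ j, soft (a j) lam2 * θ j) ^ 2
            ≤ (∑ j, soft (a j) lam2 ^ 2) * (∑ j, θ j ^ 2) :=
              Finset.sum_mul_sq_le_sq_mul_sq _ _ _
          _ ≤ lam1 ^ 2 * (∑ j, θ j ^ 2) :=
              mul_le_mul_of_nonneg_right hsum (Finset.sum_nonneg fun j _ => sq_nonneg _)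
          _ = (lam1 * norm2 θ) ^ 2 := by rw [mul_pow, norm2_sq]
      nlinarith [hsq, hnn]
    linarith [step1, step2, hQθ]
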